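/- Let ν be a probability measure on ℝ, let Φ(z) = (2π)^{−1/2} ∫_{−∞}^z e^{−v²/2} dv be the standard normal cumulative distribution function, and let I ⊆ ℝ be an open interval such that 0 < ν((−∞,s]) < 1 for all s ∈ I and the function s ↦ Φ^{−1}(ν((−∞,s])) is concave on I. Then the restriction of ν to I is absolutely continuous with respect to Lebesgue measure; its density equals, Lebesgue-almost everywhere on I, the right derivative of the distribution function s ↦ ν((−∞,s]). -/

import Mathlib

open MeasureTheory Set Metric

/-- The standard normal cumulative distribution function `Φ`. -/
noncomputable def stdNormalCDF (z : ℝ) : ℝ :=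
  ∫ v in Set.Iic z, Real.exp (-v ^ 2 / 2) / Real.sqrt (2 * Real.pi)

lemma gauss_integrable :
    Integrable (fun v : ℝ => Real.exp (-v ^ 2 / 2) / Real.sqrt (2 * Real.pi)) := by
  have h : (fun v : ℝ => Real.exp (-v ^ 2 / 2) / Real.sqrt (2 * Real.pi))
      = fun v : ℝ => Real.exp (-(1/2) * v ^ 2) * (Real.sqrt (2 * Real.pi))⁻¹ := by
    funext v; rw [div_eq_mul_inv]; ring_nf
  rw [h]
  exact (integrable_exp_neg_mul_sq (by norm_num)).mul_const _

lemma stdNormalCDF_sub {w z : ℝ} (h : w ≤ z) :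
    stdNormalCDF z - stdNormalCDF w
      = ∫ v in Set.Ioc w z, Real.exp (-v ^ 2 / 2) / Real.sqrt (2 * Real.pi) := by
  have key : stdNormalCDF z = stdNormalCDF w
      + ∫ v in Set.Ioc w z, Real.exp (-v ^ 2 / 2) / Real.sqrt (2 * Real.pi) := by
    rw [stdNormalCDF, stdNormalCDF, ← Set.Iic_union_Ioc_eq_Iic h,
      setIntegral_union (Set.Iic_disjoint_Ioc le_rfl) measurableSet_Ioc
        gauss_integrable.integrableOn gauss_integrable.integrableOn]
  rw [key]; ring

lemma stdNormalCDF_mono : Monotone stdNormalCDF := by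
  intro w z h
  have h0 : 0 ≤ ∫ v in Set.Ioc w z, Real.exp (-v ^ 2 / 2) / Real.sqrt (2 * Real.pi) := by
    apply setIntegral_nonneg measurableSet_Ioc
    intro v _; positivity
  nlinarith [stdNormalCDF_sub h]

lemma stdNormalCDF_lip {w z : ℝ} (h : w ≤ z) :
    stdNormalCDF z - stdNormalCDF w ≤ (z - w) * (Real.sqrt (2 * Real.pi))⁻¹ := by
  rw [stdNormalCDF_sub h]
  have hb : ∀ v ∈ Set.Ioc w z, Real.exp (-v ^ 2 / 2) / Real.sqrt (2 * Real.pi)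
      ≤ (Real.sqrt (2 * Real.pi))⁻¹ := by
    intro v _
    rw [div_eq_mul_inv]
    have h1 : Real.exp (-v ^ 2 / 2) ≤ 1 := by
      rw [Real.exp_le_one_iff]; nlinarith [sq_nonneg v]
    have h2 : (0:ℝ) ≤ (Real.sqrt (2 * Real.pi))⁻¹ := by positivity
    nlinarith
  calc (∫ v in Set.Ioc w z, Real.exp (-v ^ 2 / 2) / Real.sqrt (2 * Real.pi))
      ≤ ∫ _v in Set.Ioc w z, (Real.sqrt (2 * Real.pi))⁻¹ := by
        apply setIntegral_mono_on gauss_integrable.integrableOn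
          (integrableOn_const (by simp [Real.volume_Ioc]))
          measurableSet_Ioc hb
    _ = (z - w) * (Real.sqrt (2 * Real.pi))⁻¹ := by
        rw [setIntegral_const, Real.volume_real_Ioc, smul_eq_mul, max_eq_left (by linarith)]

lemma concave_lipschitzOn_Icc {S : ℝ → ℝ} {a b c d : ℝ}
    (hS : ConcaveOn ℝ (Set.Ioo a b) S) (hac : a < c) (hcd : c < d) (hdb : d < b) :
    ∃ K : NNReal, LipschitzOnWith K S (Set.Icc c d) := by
  set ε : ℝ := min (c - a) (b - d) / 2 with hε
  have hε0 : 0 < ε := by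
    have h1 := sub_pos.2 hac; have h2 := sub_pos.2 hdb
    have : 0 < min (c - a) (b - d) := lt_min h1 h2
    positivity
  have hεca : ε ≤ (c - a) / 2 := by
    apply div_le_div_of_nonneg_right (min_le_left _ _) (by norm_num)
  have hεbd : ε ≤ (b - d) / 2 := by
    apply div_le_div_of_nonneg_right (min_le_right _ _) (by norm_num)
  set c' : ℝ := c - ε with hc'def
  set d' : ℝ := d + ε with hd'def
  have hac' : a < c' := by simp only [hc'def]; linarith
  have hd'b : d' < b := by simp only [hd'def]; linarith
  have hc'd' : c' < d' := by simp only [hc'def, hd'def]; linarith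
  set x₀ : ℝ := (c' + d') / 2 with hx₀
  set r : ℝ := (d' - c') / 2 with hr
  have hball : ball x₀ r = Ioo c' d' := by
    rw [Real.ball_eq_Ioo]
    congr 1 <;> simp only [hx₀, hr] <;> ring
  have hr0 : ε / 2 < r := by simp only [hr, hc'def, hd'def]; linarith
  have hIccsub : Icc c' d' ⊆ Ioo a b := Icc_subset_Ioo hac' hd'b
  have hconc : ConcaveOn ℝ (ball x₀ r) S := by
    apply hS.subset _ (convex_ball _ _)
    rw [hball]
    exact fun x hx => hIccsub (Ioo_subset_Icc_self hx)
  have hbounded : Bornology.IsBounded (S '' ball x₀ r) := by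
    have hcompact : IsCompact (S '' Icc c' d') :=
      isCompact_Icc.image_of_continuousOn ((hS.continuousOn isOpen_Ioo).mono hIccsub)
    apply hcompact.isBounded.subset
    rw [hball]
    exact Set.image_mono Ioo_subset_Icc_self
  obtain ⟨K, hK⟩ := hconc.exists_lipschitzOnWith_of_isBounded
    (show r - ε / 2 < r by linarith) hbounded
  refine ⟨K, hK.mono ?_⟩
  rw [Real.ball_eq_Ioo]
  intro x hx
  constructor
  · have : x₀ - (r - ε / 2) = c - ε / 2 := by
      simp only [hx₀, hr, hc'def, hd'def]; ring
    rw [this]; exact lt_of_lt_of_le (by linarith) hx.1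
  · have : x₀ + (r - ε / 2) = d + ε / 2 := by
      simp only [hx₀, hr, hc'def, hd'def]; ring
    rw [this]; exact lt_of_le_of_lt hx.2 (by linarith)


lemma key_measure (ν : Measure ℝ) [IsProbabilityMeasure ν] {a b : ℝ}
    (S : ℝ → ℝ) (hS : ConcaveOn ℝ (Set.Ioo a b) S)
    (hSΦ : ∀ s ∈ Set.Ioo a b, stdNormalCDF (S s) = ProbabilityTheory.cdf ν s)
    {c d : ℝ} (hac : a < c) (hcd : c < d) (hdb : d < b) :
    ∃ μ : Measure ℝ, μ ≪ volume ∧ ν.restrict (Set.Ioc c d) = μ.restrict (Set.Ioc c d) := by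
  obtain ⟨K, hK⟩ := concave_lipschitzOn_Icc hS hac hcd hdb
  set F : StieltjesFunction ℝ := ProbabilityTheory.cdf ν with hFdef
  set cl : ℝ → ℝ := fun x => max c (min x d) with hcl
  have hclmem : ∀ x, cl x ∈ Set.Icc c d := fun x =>
    ⟨le_max_left _ _, max_le hcd.le (min_le_right _ _)⟩
  have hclmono : Monotone cl := fun x y hxy =>
    max_le_max le_rfl (min_le_min hxy le_rfl)
  have hcl_lip : ∀ x y : ℝ, x ≤ y → cl y - cl x ≤ y - x := by
    intro x y hxy
    simp only [hcl, min_def, max_def]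
    split_ifs <;> linarith
  have hcl_eq : ∀ x ∈ Set.Icc c d, cl x = x := by
    intro x hx
    simp only [hcl, min_eq_left hx.2, max_eq_right hx.1]
  have hIccIoo : Set.Icc c d ⊆ Set.Ioo a b := Set.Icc_subset_Ioo hac hdb
  set L : ℝ := (K : ℝ) * (Real.sqrt (2 * Real.pi))⁻¹ with hLdef
  have hL0 : 0 ≤ L := by positivity
  set G : ℝ → ℝ := fun x => F (cl x) with hGdef
  have hGmono : Monotone G := fun x y hxy => F.mono (hclmono hxy)
  have hGF : ∀ x ∈ Set.Icc c d, G x = F x := fun x hx => by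
    simp only [hGdef, hcl_eq x hx]
  have hGlip : ∀ x y : ℝ, x ≤ y → G y - G x ≤ L * (y - x) := by
    intro x y hxy
    have hx' := hclmem x
    have hy' := hclmem y
    have hGx : G x = stdNormalCDF (S (cl x)) := (hSΦ _ (hIccIoo hx')).symm
    have hGy : G y = stdNormalCDF (S (cl y)) := (hSΦ _ (hIccIoo hy')).symm
    rcases le_total (S (cl x)) (S (cl y)) with hsle | hsle
    · have h1 := stdNormalCDF_lip hsle
      have h2 : S (cl y) - S (cl x) ≤ (K : ℝ) * (y - x) := by
        have := hK.dist_le_mul _ hy' _ hx'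
        rw [Real.dist_eq, Real.dist_eq] at this
        have h3 : |cl y - cl x| ≤ y - x := by
          rw [abs_of_nonneg (sub_nonneg.2 (hclmono hxy))]
          exact hcl_lip x y hxy
        calc S (cl y) - S (cl x) ≤ |S (cl y) - S (cl x)| := le_abs_self _
          _ ≤ (K : ℝ) * |cl y - cl x| := this
          _ ≤ (K : ℝ) * (y - x) := by
              exact mul_le_mul_of_nonneg_left h3 K.2
      have hsq : (0:ℝ) ≤ (Real.sqrt (2 * Real.pi))⁻¹ := by positivity
      calc G y - G x = stdNormalCDF (S (cl y)) - stdNormalCDF (S (cl x)) := by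
            rw [hGx, hGy]
        _ ≤ (S (cl y) - S (cl x)) * (Real.sqrt (2 * Real.pi))⁻¹ := h1
        _ ≤ ((K : ℝ) * (y - x)) * (Real.sqrt (2 * Real.pi))⁻¹ :=
            mul_le_mul_of_nonneg_right h2 hsq
        _ = L * (y - x) := by rw [hLdef]; ring
    · have : G y ≤ G x := by rw [hGx, hGy]; exact stdNormalCDF_mono hsle
      nlinarith [mul_nonneg hL0 (sub_nonneg.2 hxy)]
  have hGcont : Continuous G := by
    have hlw : LipschitzWith (Real.toNNReal L) G := by
      apply LipschitzWith.of_dist_le_mul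
      intro x y
      rw [Real.dist_eq, Real.dist_eq, Real.coe_toNNReal L hL0]
      rcases le_total x y with h | h
      · rw [abs_of_nonpos (sub_nonpos.2 (hGmono h)), abs_of_nonpos (sub_nonpos.2 h)]
        have := hGlip x y h; linarith
      · rw [abs_of_nonneg (sub_nonneg.2 (hGmono h)), abs_of_nonneg (sub_nonneg.2 h)]
        have := hGlip y x h; linarith
    exact hlw.continuous
  set SG : StieltjesFunction ℝ := ⟨G, hGmono, fun x => hGcont.continuousAt.continuousWithinAt⟩
    with hSGdef
  set SH : StieltjesFunction ℝ :=
    ⟨fun x => L * x - G x,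
     fun x y hxy => by have := hGlip x y hxy; simp only; nlinarith,
     fun x => ((continuous_const.mul continuous_id).sub hGcont).continuousAt.continuousWithinAt⟩
    with hSHdef
  have hsum : SG.measure + SH.measure = (ENNReal.ofReal L) • volume := by
    refine Measure.ext_of_Ioc' _ _ (fun u v _ => ?_) (fun u v huv => ?_)
    · rw [Measure.add_apply, StieltjesFunction.measure_Ioc, StieltjesFunction.measure_Ioc]
      exact (ENNReal.add_lt_top.2 ⟨ENNReal.ofReal_lt_top, ENNReal.ofReal_lt_top⟩).ne
    rw [Measure.add_apply, StieltjesFunction.measure_Ioc, StieltjesFunction.measure_Ioc,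
      Measure.smul_apply, Real.volume_Ioc, smul_eq_mul,
      ← ENNReal.ofReal_mul hL0]
    have h1 : (0:ℝ) ≤ SG v - SG u := sub_nonneg.2 (SG.mono huv.le)
    have h2 : (0:ℝ) ≤ SH v - SH u := sub_nonneg.2 (SH.mono huv.le)
    rw [← ENNReal.ofReal_add h1 h2]
    congr 1
    show G v - G u + (L * v - G v - (L * u - G u)) = L * (v - u)
    ring
  have hACG : SG.measure ≪ volume := by
    refine Measure.AbsolutelyContinuous.mk fun s hs h0 => ?_
    have hle : SG.measure s ≤ (SG.measure + SH.measure) s := by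
      rw [Measure.add_apply]; exact le_self_add
    rw [hsum, Measure.smul_apply, smul_eq_mul, h0, mul_zero] at hle
    exact le_antisymm hle (zero_le)
  have hIoc : ∀ p q : ℝ, c ≤ p → q ≤ d → ν (Set.Ioc p q) = SG.measure (Set.Ioc p q) := by
    intro p q hcp hqd
    rcases lt_or_ge q p with h | h
    · rw [Set.Ioc_eq_empty (not_lt.2 h.le), measure_empty, measure_empty]
    · have hp : p ∈ Set.Icc c d := ⟨hcp, le_trans h hqd⟩
      have hq : q ∈ Set.Icc c d := ⟨le_trans hcp h, hqd⟩
      conv_lhs => rw [← ProbabilityTheory.measure_cdf (μ := ν)]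
      rw [StieltjesFunction.measure_Ioc, StieltjesFunction.measure_Ioc]
      have e1 : SG q = F q := hGF q hq
      have e2 : SG p = F p := hGF p hp
      rw [e1, e2]
  have hrestr : ν.restrict (Set.Ioc c d) = SG.measure.restrict (Set.Ioc c d) := by
    refine Measure.ext_of_Ioc_finite _ _ ?_ (fun u v huv => ?_)
    · rw [Measure.restrict_apply_univ, Measure.restrict_apply_univ]
      exact hIoc c d le_rfl le_rfl
    · rw [Measure.restrict_apply measurableSet_Ioc, Measure.restrict_apply measurableSet_Ioc,
        Set.Ioc_inter_Ioc]
      exact hIoc _ _ le_sup_right inf_le_right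
  exact ⟨SG.measure, hACG, hrestr⟩


/-- Ehrhard-type regularity: if `ν` is a probability measure on `ℝ` whose distribution function
`F(s) = ν((−∞,s])` takes values in `(0,1)` on the open interval `(a,b)` and `Φ⁻¹ ∘ F` is concave
there (witnessed by a concave `S` with `Φ ∘ S = F` on `(a,b)`), then `ν` restricted to `(a,b)` is
absolutely continuous with respect to Lebesgue measure, with density the right derivative of `F`. -/
theorem cdf_concave_absolutely_continuous (ν : Measure ℝ) [IsProbabilityMeasure ν]
    (a b : ℝ) (hab : a < b)
    (hcdf : ∀ s ∈ Set.Ioo a b, 0 < (ν (Set.Iic s)).toReal ∧ (ν (Set.Iic s)).toReal < 1)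
    (S : ℝ → ℝ) (hS : ConcaveOn ℝ (Set.Ioo a b) S)
    (hSΦ : ∀ s ∈ Set.Ioo a b, stdNormalCDF (S s) = (ν (Set.Iic s)).toReal) :
    ν.restrict (Set.Ioo a b) ≪ volume ∧
    ν.restrict (Set.Ioo a b) =
      (volume.restrict (Set.Ioo a b)).withDensity fun s =>
        ENNReal.ofReal (derivWithin (fun u => (ν (Set.Iic u)).toReal) (Set.Ici s) s) := by
  have hSΦ' : ∀ s ∈ Set.Ioo a b, stdNormalCDF (S s) = ProbabilityTheory.cdf ν s := by
    intro s hs; rw [ProbabilityTheory.cdf_eq_real, measureReal_def]; exact hSΦ s hs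
  -- absolute continuity
  have ham : a < (a + b) / 2 := by linarith
  have hmb : (a + b) / 2 < b := by linarith
  obtain ⟨u, hu_anti, hu_mem, hu_tendsto⟩ := exists_seq_strictAnti_tendsto' ham
  obtain ⟨v, hv_mono, hv_mem, hv_tendsto⟩ := exists_seq_strictMono_tendsto' hmb
  have hAC : ν.restrict (Set.Ioo a b) ≪ volume := by
    refine Measure.AbsolutelyContinuous.mk fun s hs h0 => ?_
    rw [Measure.restrict_apply hs]
    have hcover : s ∩ Set.Ioo a b ⊆ ⋃ n, s ∩ Set.Ioc (u n) (v n) := by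
      rintro x ⟨hxs, hxa, hxb⟩
      obtain ⟨n₁, hn₁⟩ := (hu_tendsto.eventually_lt_const hxa).exists
      obtain ⟨n₂, hn₂⟩ := (hv_tendsto.eventually_const_lt hxb).exists
      refine Set.mem_iUnion.2 ⟨max n₁ n₂, hxs, ?_, ?_⟩
      · exact lt_of_le_of_lt (hu_anti.antitone (le_max_left _ _)) hn₁
      · exact le_trans hn₂.le (hv_mono.monotone (le_max_right _ _))
    refine measure_mono_null hcover (measure_iUnion_null fun n => ?_)
    obtain ⟨μn, hACn, heqn⟩ := key_measure ν S hS hSΦ'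
      (hu_mem n).1 ((hu_mem n).2.trans (hv_mem n).1) (hv_mem n).2
    have : ν (s ∩ Set.Ioc (u n) (v n)) = (ν.restrict (Set.Ioc (u n) (v n))) s := by
      rw [Measure.restrict_apply hs]
    rw [this, heqn, Measure.restrict_apply hs]
    exact measure_mono_null Set.inter_subset_left (hACn h0)
  refine ⟨hAC, ?_⟩
  -- the withDensity identity
  have hderiv : ∀ᵐ x ∂(volume : Measure ℝ),
      HasDerivAt (ProbabilityTheory.cdf ν) ((ν.rnDeriv volume x).toReal) x := by
    have h := (ProbabilityTheory.cdf ν).ae_hasDerivAt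
    rwa [ProbabilityTheory.measure_cdf] at h
  have hcdf_eq : (fun u => (ν (Set.Iic u)).toReal) = (ProbabilityTheory.cdf ν : ℝ → ℝ) :=
    funext fun x => (ProbabilityTheory.cdf_eq_real (μ := ν) x).symm
  have hfae : (fun x => ENNReal.ofReal
        (derivWithin (fun u => (ν (Set.Iic u)).toReal) (Set.Ici x) x))
      =ᵐ[volume] ν.rnDeriv volume := by
    filter_upwards [hderiv, Measure.rnDeriv_lt_top ν volume] with x hx hlt
    have hx' : HasDerivAt (fun u => (ν (Set.Iic u)).toReal) ((ν.rnDeriv volume x).toReal) x := by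
      rw [hcdf_eq]; exact hx
    have hd : derivWithin (fun u => (ν (Set.Iic u)).toReal) (Set.Ici x) x
        = (ν.rnDeriv volume x).toReal :=
      hx'.hasDerivWithinAt.derivWithin (uniqueDiffOn_Ici x x Set.self_mem_Ici)
    simp only [hd, ENNReal.ofReal_toReal hlt.ne]
  have hsp : (ν.singularPart volume).restrict (Set.Ioo a b) = 0 := by
    rw [Measure.restrict_eq_zero]
    obtain ⟨N, hNmeas, hN1, hN2⟩ := Measure.mutuallySingular_singularPart ν volume
    have hb1 : ν.singularPart volume (Set.Ioo a b ∩ N) = 0 :=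
      measure_mono_null Set.inter_subset_right hN1
    have hb2 : ν.singularPart volume (Set.Ioo a b ∩ Nᶜ) = 0 := by
      have hν : ν (Nᶜ ∩ Set.Ioo a b) = 0 := by
        have := hAC hN2
        rwa [Measure.restrict_apply hNmeas.compl] at this
      refine le_antisymm ?_ (zero_le)
      calc ν.singularPart volume (Set.Ioo a b ∩ Nᶜ)
          ≤ ν (Set.Ioo a b ∩ Nᶜ) := Measure.singularPart_le ν volume _
        _ = 0 := by rwa [Set.inter_comm] at hν
    refine le_antisymm ?_ (zero_le)
    calc ν.singularPart volume (Set.Ioo a b)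
        = ν.singularPart volume (Set.Ioo a b ∩ N ∪ Set.Ioo a b ∩ Nᶜ) := by
          rw [Set.inter_union_compl]
      _ ≤ ν.singularPart volume (Set.Ioo a b ∩ N)
          + ν.singularPart volume (Set.Ioo a b ∩ Nᶜ) := measure_union_le _ _
      _ = 0 := by rw [hb1, hb2, add_zero]
  calc ν.restrict (Set.Ioo a b)
      = (ν.singularPart volume + volume.withDensity (ν.rnDeriv volume)).restrict
          (Set.Ioo a b) := by rw [← Measure.haveLebesgueDecomposition_add ν volume]
    _ = (volume.withDensity (ν.rnDeriv volume)).restrict (Set.Ioo a b) := by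
        rw [Measure.restrict_add, hsp, zero_add]
    _ = (volume.restrict (Set.Ioo a b)).withDensity (ν.rnDeriv volume) := by
        rw [restrict_withDensity measurableSet_Ioo]
    _ = (volume.restrict (Set.Ioo a b)).withDensity fun s =>
          ENNReal.ofReal (derivWithin (fun u => (ν (Set.Iic u)).toReal) (Set.Ici s) s) :=
        (withDensity_congr_ae (ae_restrict_of_ae hfae)).symm
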